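/- arXiv:1102.3151 — 2 statements merged into one kernel-verified Lean document; each statement's English description precedes it below -/
import Mathlib

section
/- There exist Turing functionals Ψ, Φ such that for all total multivalued functions f, g : {0,1}* ⇉ {0,1}* and any choice function I of f ⊕ g, either Ψ^I is a choice function of f or Φ^I is a choice function of g. -/
/-- Domain of a search problem (relation). -/
def SDom (P : ℕ → ℕ → Prop) : Set ℕ := {x | ∃ y, P x y}

/-- Meet of search problems: `(f ⊕ g)(⟨x,y⟩) = 0·f(x) ∪ 1·g(y)`. -/
def Oplus (f g : ℕ → ℕ → Prop) : ℕ → ℕ → Prop := fun x y =>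
  ∃ a b, x = Nat.pair a b ∧
    ((∃ z, y = 2 * z ∧ f a z ∧ b ∈ SDom g) ∨
     (∃ z, y = 2 * z + 1 ∧ g b z ∧ a ∈ SDom f))

/-- Partial recursiveness relative to an oracle `O` (relativized `Nat.Partrec`);
a Turing functional is an operator that is `RecIn` any oracle it is given. -/
inductive RecIn (O : ℕ →. ℕ) : (ℕ →. ℕ) → Prop
  | zero : RecIn O (pure 0)
  | succ : RecIn O ↑Nat.succ
  | left : RecIn O ↑fun n : ℕ => n.unpair.1
  | right : RecIn O ↑fun n : ℕ => n.unpair.2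
  | oracle : RecIn O O
  | pair {f g} : RecIn O f → RecIn O g → RecIn O fun n => Nat.pair <$> f n <*> g n
  | comp {f g} : RecIn O f → RecIn O g → RecIn O fun n => g n >>= f
  | prec {f g} : RecIn O f → RecIn O g → RecIn O (Nat.unpaired fun a n =>
      n.rec (f a) fun y IH => do let i ← IH; g (Nat.pair a (Nat.pair y i)))
  | rfind {f} : RecIn O f → RecIn O fun a =>
      Nat.rfind fun n => (fun m => m = 0) <$> f (Nat.pair a n)

/-!
The parity of `I ⟨x, y⟩` tells which side of `f ⊕ g` answered. `Ψ^I(x)` searches for a `y`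
with `I ⟨x, y⟩` even and `Φ^I(y)` for an `x` with `I ⟨x, y⟩` odd; either way the rest of the
answer is a correct value. If `Ψ^I` diverges at some `x₀`, then `I ⟨x₀, y⟩` is odd for every `y`,
so `Φ^I(y)` halts at the latest when its search reaches `x₀`.
-/

theorem RecIn.of_recursiveIn_singleton {O f : ℕ →. ℕ} (h : Nat.RecursiveIn {O} f) :
    RecIn O f := by
  induction h with
  | zero => exact .zero
  | succ => exact .succ
  | left => exact .left
  | right => exact .right
  | oracle g hg => exact (Set.mem_singleton_iff.mp hg) ▸ .oracle
  | pair _ _ ih₁ ih₂ => exact .pair ih₁ ih₂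
  | comp _ _ ih₁ ih₂ => exact .comp ih₁ ih₂
  | prec _ _ ih₁ ih₂ => exact .prec ih₁ ih₂
  | rfind _ ih => exact .rfind ih

def searchPair (t o : ℕ → ℕ) : ℕ →. ℕ := fun a =>
  (Nat.rfind fun n => Part.some (t (Nat.pair a n) = 0)).map fun n => o (Nat.pair a n)

theorem exists_of_mem_searchPair {t o : ℕ → ℕ} {a z : ℕ} (h : z ∈ searchPair t o a) :
    ∃ n, t (Nat.pair a n) = 0 ∧ o (Nat.pair a n) = z := by
  obtain ⟨n, hn, rfl⟩ := Part.mem_map_iff _ |>.mp h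
  exact ⟨n, by simpa using Nat.rfind_spec hn, rfl⟩

theorem exists_mem_searchPair {t o : ℕ → ℕ} {a : ℕ} (h : ∃ n, t (Nat.pair a n) = 0) :
    ∃ z, z ∈ searchPair t o a := by
  obtain ⟨n, hn⟩ := h
  have hdom : (Nat.rfind fun n => Part.some (decide (t (Nat.pair a n) = 0))).Dom :=
    Nat.rfind_dom.mpr ⟨n, by simpa using hn, fun _ => trivial⟩
  exact Part.dom_iff_mem.mp hdom

/-- Decodes an answer of `f ⊕ g` coded as `2 * z` (for `b = 0`) or `2 * z + 1` (for `b = 1`). -/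
def searchParity (b : ℕ) (J : ℕ → ℕ) : ℕ →. ℕ :=
  searchPair (fun p => (J p + b) % 2) (fun p => J p / 2)

namespace Nat.RecursiveIn

variable {O : Set (ℕ →. ℕ)}

theorem comp_total {u v : ℕ → ℕ} (hu : Nat.RecursiveIn O (u : ℕ →. ℕ))
    (hv : Nat.RecursiveIn O (v : ℕ →. ℕ)) : Nat.RecursiveIn O ((u ∘ v : ℕ → ℕ) : ℕ →. ℕ) :=
  (hu.comp hv).of_eq fun _ => Part.bind_some _ _

theorem searchPair {t o : ℕ → ℕ} (ht : Nat.RecursiveIn O (t : ℕ →. ℕ))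
    (ho : Nat.RecursiveIn O (o : ℕ →. ℕ)) :
    Nat.RecursiveIn O (searchPair t o) :=
  (ho.comp (Nat.Primrec.id.recursiveIn.pair ht.rfind)).of_eq fun a => by
    change Part.bind _ (fun n => Part.some (o n)) = _
    simp [_root_.searchPair, PFun.coe_val, Seq.seq, Part.map_eq_map, Part.bind_some_eq_map,
      Part.map_map]
    rfl

theorem searchParity {J : ℕ → ℕ} (b : ℕ) (hJ : Nat.RecursiveIn O (J : ℕ →. ℕ)) :
    Nat.RecursiveIn O (searchParity b J) :=
  RecursiveIn.searchPair
    ((Primrec.nat_iff.mp (Primrec.nat_mod.comp (Primrec.nat_add.comp .id (.const b))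
      (.const 2))).recursiveIn.comp_total hJ)
    ((Primrec.nat_iff.mp (Primrec.nat_div.comp .id (.const 2))).recursiveIn.comp_total hJ)

end Nat.RecursiveIn

theorem Oplus.pair_spec {f g : ℕ → ℕ → Prop} {x y v : ℕ} (h : Oplus f g (Nat.pair x y) v) :
    (v % 2 = 0 → f x (v / 2)) ∧ (v % 2 = 1 → g y (v / 2)) := by
  obtain ⟨a, b, hab, h⟩ := h
  obtain ⟨rfl, rfl⟩ := Nat.pair_eq_pair.mp hab.symm
  rcases h with ⟨z, rfl, hz, -⟩ | ⟨z, rfl, hz, -⟩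
  · refine ⟨fun _ => ?_, fun _ => by omega⟩
    rwa [Nat.mul_div_cancel_left z two_pos]
  · refine ⟨fun _ => by omega, fun _ => ?_⟩
    rwa [show (2 * z + 1) / 2 = z by omega]

/-- there are Turing functionals `Ψ`, `Φ` such that for all total
multivalued `f`, `g` and any choice function `I` of `f ⊕ g`, all values of `Ψ^I`
are correct for `f`, all values of `Φ^I` are correct for `g`, and at least one of
`Ψ^I`, `Φ^I` is total — so `Ψ^I` is a choice function of `f` or `Φ^I` one of `g`. -/
theorem turing_functionals_for_oplus :
    ∃ Ψ Φ : (ℕ → ℕ) → (ℕ →. ℕ),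
      (∀ I : ℕ → ℕ, RecIn ↑I (Ψ I) ∧ RecIn ↑I (Φ I)) ∧
      ∀ f g : ℕ → ℕ → Prop, (∀ x, ∃ y, f x y) → (∀ x, ∃ y, g x y) →
        ∀ I : ℕ → ℕ, (∀ x y, Oplus f g (Nat.pair x y) (I (Nat.pair x y))) →
          (∀ x z, z ∈ Ψ I x → f x z) ∧ (∀ y z, z ∈ Φ I y → g y z) ∧
          ((∀ x, ∃ z, z ∈ Ψ I x) ∨ (∀ y, ∃ z, z ∈ Φ I y)) := by
  let swap : ℕ → ℕ := Nat.unpaired (Function.swap Nat.pair)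
  have swap_pair (x y : ℕ) : swap (Nat.pair y x) = Nat.pair x y := by simp [swap]
  refine ⟨searchParity 0, fun I => searchParity 1 (I ∘ swap), fun I => ⟨?_, ?_⟩,
    fun f g _ _ I hI => ⟨fun x z hz => ?_, fun y z hz => ?_, ?_⟩⟩
  · have hI : Nat.RecursiveIn {(I : ℕ →. ℕ)} I := .oracle _ (Set.mem_singleton _)
    exact .of_recursiveIn_singleton (hI.searchParity 0)
  · have hI : Nat.RecursiveIn {(I : ℕ →. ℕ)} I := .oracle _ (Set.mem_singleton _)
    exact .of_recursiveIn_singleton ((hI.comp_total Nat.Primrec.swap.recursiveIn).searchParity 1)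
  · obtain ⟨y, heven, rfl⟩ := exists_of_mem_searchPair hz
    exact (hI x y).pair_spec.1 (by simpa using heven)
  · obtain ⟨x, hodd, rfl⟩ := exists_of_mem_searchPair hz
    simp only [Function.comp_apply, swap_pair] at hodd ⊢
    exact (hI x y).pair_spec.2 (Nat.succ_mod_two_eq_zero_iff.mp hodd)
  · by_cases hΨ : ∀ x, ∃ y, I (Nat.pair x y) % 2 = 0
    · exact .inl fun x => exists_mem_searchPair (by simpa using hΨ x)
    · push Not at hΨ
      obtain ⟨x₀, hx₀⟩ := hΨ
      refine .inr fun y => exists_mem_searchPair ⟨x₀, ?_⟩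
      simp only [Function.comp_apply, swap_pair]
      exact Nat.succ_mod_two_eq_zero_iff.mpr (Nat.mod_two_ne_zero.mp (hx₀ y))
end

section
/- If total search problems f and g satisfy that f ⊕ g has a computable choice function, then f has a computable choice function or g has a computable choice function. Consequently, degrees with total representatives cannot form a nontrivial meet giving the bottom nonzero degree 1 in the computable many-one degrees of search problems. -/
/-- Graph of a partial function as a search problem. -/
def SGraph (f : ℕ →. ℕ) : ℕ → ℕ → Prop := fun x y => y ∈ f x

/-- Composition of relations: `RComp P Q = P ∘ Q`. -/
def RComp (P Q : ℕ → ℕ → Prop) : ℕ → ℕ → Prop := fun x z => ∃ y, Q x y ∧ P y z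

/-- Entailment order on search problems: `P' ≼ P`. -/
def Ent (P' P : ℕ → ℕ → Prop) : Prop :=
  SDom P' ⊆ SDom P ∧ ∀ x y, P x y → P' x y

/-- Pairing of partial functions: `x ↦ ⟨f x, g x⟩`. -/
def PPair (f g : ℕ →. ℕ) : ℕ →. ℕ :=
  fun x => (f x).bind fun a => (g x).map fun b => Nat.pair a b

/-- Many-one reducibility with computable (partial recursive) witnesses. -/
def RedM (P Q : ℕ → ℕ → Prop) : Prop :=
  ∃ H K : ℕ →. ℕ, Nat.Partrec H ∧ Nat.Partrec K ∧
    (∀ x ∈ SDom P, ∃ k ∈ K x, k ∈ SDom Q) ∧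
    (∀ x ∈ SDom P, ∀ k ∈ K x, ∀ y, Q k y → ∃ h ∈ H (Nat.pair x y), P x h)

/-- The identity function on strings, as a search problem (its degree is `1`). -/
def IdRel : ℕ → ℕ → Prop := fun x y => y = x

/-- A total multivalued function has a computable choice function. -/
def HasTotalCompChoice (f : ℕ → ℕ → Prop) : Prop :=
  ∃ c : ℕ → ℕ, Computable c ∧ ∀ x, f x (c x)

/- Given a computable choice function `c` of `f ⊕ g`, look at the rows `b ↦ c ⟨a, b⟩`. If
some row always answers on the right, it is a choice function of `g`. Otherwise every row
contains a left answer, and searching row `a` for the first one is a total computable choice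
function of `f`.
For a total problem, `RedM _ IdRel` is the same as having a computable choice function, which
turns this into the statement about the degree `1`. -/

lemma hasTotalCompChoice_of_partrec {P : ℕ → ℕ → Prop} {F : ℕ →. ℕ} (hF : Partrec F)
    (h : ∀ x, ∃ y ∈ F x, P x y) : HasTotalCompChoice P := by
  choose c hcF hcP using h
  exact ⟨c, hF.of_eq_tot hcF, hcP⟩

lemma HasTotalCompChoice.redM_idRel {P : ℕ → ℕ → Prop} (h : HasTotalCompChoice P) :
    RedM P IdRel := by
  obtain ⟨c, hc, hPc⟩ := h
  refine ⟨fun n => Part.some (c n.unpair.1), Part.some, ?_, ?_, ?_, ?_⟩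
  · exact Partrec.nat_iff.1 (hc.comp (Computable.fst.comp Computable.unpair)).partrec
  · exact Partrec.nat_iff.1 Computable.id.partrec
  · exact fun x _ => ⟨x, Part.mem_some x, x, rfl⟩
  · intro x _ _ _ _ _
    exact ⟨c x, by simp, hPc x⟩

lemma RedM.hasTotalCompChoice {P : ℕ → ℕ → Prop} (htot : ∀ x, ∃ y, P x y)
    (h : RedM P IdRel) : HasTotalCompChoice P := by
  obtain ⟨H, K, hH, hK, hKdom, hHspec⟩ := h
  refine hasTotalCompChoice_of_partrec (F := fun x => (K x).bind fun k => H (Nat.pair x k))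
    ((Partrec.nat_iff.2 hK).bind ((Partrec.nat_iff.2 hH).comp Primrec₂.natPair.to_comp))
    fun x => ?_
  obtain ⟨k, hk, -⟩ := hKdom x (htot x)
  obtain ⟨y, hy, hPy⟩ := hHspec x (htot x) k hk k rfl
  exact ⟨y, Part.mem_bind hk hy, hPy⟩

section OplusChoice

variable {f g : ℕ → ℕ → Prop} {c : ℕ → ℕ}

lemma oplus_total (hf : ∀ x, ∃ y, f x y) (hg : ∀ x, ∃ y, g x y) (x : ℕ) :
    ∃ y, Oplus f g x y := by
  obtain ⟨z, hz⟩ := hf x.unpair.1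
  exact ⟨2 * z, x.unpair.1, x.unpair.2, (Nat.pair_unpair x).symm,
    Or.inl ⟨z, rfl, hz, hg x.unpair.2⟩⟩

lemma Oplus.even_left_or_odd_right {a b y : ℕ} (h : Oplus f g (Nat.pair a b) y) :
    (y % 2 = 0 ∧ f a (y / 2)) ∨ (y % 2 = 1 ∧ g b (y / 2)) := by
  obtain ⟨a', b', hab, hy⟩ := h
  obtain ⟨rfl, rfl⟩ := Nat.pair_eq_pair.1 hab
  rcases hy with ⟨z, rfl, hz, -⟩ | ⟨z, rfl, hz, -⟩
  · exact Or.inl ⟨by omega, by rwa [Nat.mul_div_cancel_left z two_pos]⟩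
  · exact Or.inr ⟨by omega, by rwa [show (2 * z + 1) / 2 = z by omega]⟩

lemma hasTotalCompChoice_right_of_odd_row (hc : Computable c)
    (hcspec : ∀ x, Oplus f g x (c x)) (a : ℕ) (hodd : ∀ b, c (Nat.pair a b) % 2 = 1) :
    HasTotalCompChoice g := by
  refine ⟨fun b => c (Nat.pair a b) / 2, ?_, fun b => ?_⟩
  · exact Primrec.nat_div.to_comp.comp
      (hc.comp (Primrec₂.natPair.to_comp.comp (Computable.const a) Computable.id))
      (Computable.const 2)
  · rcases (hcspec (Nat.pair a b)).even_left_or_odd_right with ⟨heven, -⟩ | ⟨-, hg⟩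
    · exact absurd (hodd b) (by omega)
    · exact hg

lemma hasTotalCompChoice_left_of_even_in_rows (hc : Computable c)
    (hcspec : ∀ x, Oplus f g x (c x)) (heven : ∀ a, ∃ b, c (Nat.pair a b) % 2 = 0) :
    HasTotalCompChoice f := by
  have hsearch : Computable fun a => Nat.find (heven a) := by
    refine Computable.find (Computable.computablePred ?_) heven
    exact (Primrec.eq.comp (Primrec.nat_mod.comp .id (.const 2)) (.const 0)).decide.to_comp.comp
      (hc.comp Primrec₂.natPair.to_comp)
  refine ⟨fun a => c (Nat.pair a (Nat.find (heven a))) / 2, ?_, fun a => ?_⟩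
  · exact Primrec.nat_div.to_comp.comp
      (hc.comp (Primrec₂.natPair.to_comp.comp Computable.id hsearch)) (Computable.const 2)
  · rcases (hcspec (Nat.pair a (Nat.find (heven a)))).even_left_or_odd_right with
      ⟨-, hf⟩ | ⟨hodd, -⟩
    · exact hf
    · exact absurd (Nat.find_spec (heven a)) (by omega)

lemma HasTotalCompChoice.oplus_left_or_right (h : HasTotalCompChoice (Oplus f g)) :
    HasTotalCompChoice f ∨ HasTotalCompChoice g := by
  obtain ⟨c, hc, hcspec⟩ := h
  by_cases heven : ∀ a, ∃ b, c (Nat.pair a b) % 2 = 0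
  · exact Or.inl (hasTotalCompChoice_left_of_even_in_rows hc hcspec heven)
  · push Not at heven
    obtain ⟨a, hodd⟩ := heven
    exact Or.inr (hasTotalCompChoice_right_of_odd_row hc hcspec a fun b =>
      Nat.mod_two_ne_zero.1 (hodd b))

end OplusChoice

/-- if total search problems `f`, `g` are such that `f ⊕ g` has a
computable choice function, then `f` or `g` has one; consequently, for degrees
with total representatives, `f ⊕ g ≡ 1` forces `f ≡ 1` or `g ≡ 1`, so no two
such nontrivial degrees can have the bottom nonzero degree `1` as their meet. -/
theorem oplus_choice_split :
    (∀ f g : ℕ → ℕ → Prop, (∀ x, ∃ y, f x y) → (∀ x, ∃ y, g x y) →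
      HasTotalCompChoice (Oplus f g) →
      HasTotalCompChoice f ∨ HasTotalCompChoice g) ∧
    (∀ f g : ℕ → ℕ → Prop, (∀ x, ∃ y, f x y) → (∀ x, ∃ y, g x y) →
      RedM (Oplus f g) IdRel → RedM f IdRel ∨ RedM g IdRel) := by
  refine ⟨fun f g _ _ h => h.oplus_left_or_right, fun f g hf hg h => ?_⟩
  exact (h.hasTotalCompChoice (oplus_total hf hg)).oplus_left_or_right.imp
    HasTotalCompChoice.redM_idRel HasTotalCompChoice.redM_idRel
end
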